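/- arXiv:1905.13632 — 4 statements merged into one kernel-verified Lean document; each statement's English description precedes it below -/
import Mathlib

section
/- Define a double sequence z : ℤ × ℕ → ℝ satisfying z(k,0) = δ_{k,N} + δ_{k,−N}, and for n ≥ 1 and k² ≠ N², (N² − k²)·z(k,n) = −(1/2)·Σ_{s=1}^{n} Σ_{i=0}^{s} G(i,s)·(z(k−2i, n−s) + z(k+2i, n−s)) − Σ_{s=1}^{n} Λ(s)·z(k, n−s), with z(±N, n) = 0 for n ≥ 1, where G(i,s) and Λ(s) are arbitrary real coefficients. Then z(k,n) = 0 whenever |k − N| > 2n and |k + N| > 2n. -/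
theorem stmt_5 (N : ℕ) (hN : 0 < N)
    (G : ℕ × ℕ → ℝ) (Λ : ℕ → ℝ) (z : ℤ × ℕ → ℝ)
    (hz0 : ∀ k : ℤ, z (k, 0) =
      (if k = (N : ℤ) then 1 else 0) + (if k = -(N : ℤ) then 1 else 0))
    (hzN : ∀ n : ℕ, 1 ≤ n → z ((N : ℤ), n) = 0 ∧ z (-(N : ℤ), n) = 0)
    (hrec : ∀ n : ℕ, 1 ≤ n → ∀ k : ℤ, k ^ 2 ≠ (N : ℤ) ^ 2 →
      (((N : ℤ) ^ 2 - k ^ 2 : ℤ) : ℝ) * z (k, n)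
        = -(1 / 2) * ∑ s ∈ Finset.Icc 1 n, ∑ i ∈ Finset.range (s + 1),
            G (i, s) * (z (k - 2 * i, n - s) + z (k + 2 * i, n - s))
          - ∑ s ∈ Finset.Icc 1 n, Λ s * z (k, n - s)) :
    ∀ k : ℤ, ∀ n : ℕ, |k - (N : ℤ)| > 2 * n → |k + (N : ℤ)| > 2 * n →
      z (k, n) = 0 := by
  intro k n
  induction n using Nat.strong_induction_on generalizing k with
  | _ n ih =>
    intro h1 h2
    match n with
    | 0 =>
      simp only [Nat.cast_zero, mul_zero, gt_iff_lt, abs_pos] at h1 h2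
      rw [hz0, if_neg (by intro h; apply h1; rw [h]; ring),
        if_neg (by intro h; apply h2; rw [h]; ring)]
      ring
    | (m + 1) =>
      set n := m + 1 with hn
      have hn1 : 1 ≤ n := Nat.succ_le_succ (Nat.zero_le m)
      have hkN : k ≠ (N : ℤ) := by
        intro h; rw [h] at h1; simp at h1; omega
      have hkN' : k ≠ -(N : ℤ) := by
        intro h; rw [h] at h2; simp at h2; omega
      have hk2 : k ^ 2 ≠ (N : ℤ) ^ 2 := by
        intro h
        have : (k - N) * (k + N) = 0 := by ring_nf; linarith [h]
        rcases mul_eq_zero.mp this with h' | h'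
        · exact hkN (by linarith)
        · exact hkN' (by linarith)
      have hrec' := hrec n hn1 k hk2
      have hterm : ∀ s ∈ Finset.Icc 1 n, ∀ i : ℕ, i ≤ s → ∀ j : ℤ,
          |j| ≤ 2 * i → z (k + j, n - s) = 0 := by
        intro s hs i hi j hj
        simp only [Finset.mem_Icc] at hs
        apply ih (n - s) (by omega)
        · have hcast : ((n - s : ℕ) : ℤ) = (n : ℤ) - s := by
            rw [Int.ofNat_sub hs.2]
          rw [hcast]
          have htri := abs_sub_abs_le_abs_sub (k - N) (-j)
          rw [abs_neg, show k - N - -j = k + j - N by ring] at htri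
          have hic : (i : ℤ) ≤ s := Int.ofNat_le.mpr hi
          linarith
        · have hcast : ((n - s : ℕ) : ℤ) = (n : ℤ) - s := by
            rw [Int.ofNat_sub hs.2]
          rw [hcast]
          have htri := abs_sub_abs_le_abs_sub (k + N) (-j)
          rw [abs_neg, show k + N - -j = k + j + N by ring] at htri
          have hic : (i : ℤ) ≤ s := Int.ofNat_le.mpr hi
          linarith
      have hS1 : ∑ s ∈ Finset.Icc 1 n, ∑ i ∈ Finset.range (s + 1),
          G (i, s) * (z (k - 2 * i, n - s) + z (k + 2 * i, n - s)) = 0 := by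
        apply Finset.sum_eq_zero
        intro s hs
        apply Finset.sum_eq_zero
        intro i hi
        simp only [Finset.mem_range] at hi
        have hi' : i ≤ s := Nat.lt_succ_iff.mp hi
        have e1 : z (k - 2 * i, n - s) = 0 := by
          have := hterm s hs i hi' (-(2 * i)) (by
            rw [abs_neg, abs_of_nonneg (by positivity)])
          rw [show k + -(2 * (i : ℤ)) = k - 2 * i by ring] at this
          exact this
        have e2 : z (k + 2 * i, n - s) = 0 := by
          exact hterm s hs i hi' (2 * i) (by
            rw [abs_of_nonneg (by positivity)])
        rw [e1, e2]; ring
      have hS2 : ∑ s ∈ Finset.Icc 1 n, Λ s * z (k, n - s) = 0 := by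
        apply Finset.sum_eq_zero
        intro s hs
        have := hterm s hs 0 (Nat.zero_le s) 0 (by simp)
        rw [add_zero] at this
        rw [this]; ring
      rw [hS1, hS2] at hrec'
      have hne : (((N : ℤ) ^ 2 - k ^ 2 : ℤ) : ℝ) ≠ 0 := by
        simp only [ne_eq, Int.cast_eq_zero, sub_eq_zero]
        exact fun h => hk2 h.symm
      have : (((N : ℤ) ^ 2 - k ^ 2 : ℤ) : ℝ) * z (k, n) = 0 := by
        rw [hrec']; ring
      exact (mul_eq_zero.mp this).resolve_left hne
end

section
/- Suppose the coefficients G(i,s) satisfy G(i,s) = 0 whenever i > s (trigonometric polynomial of degree 2s at order s), and suppose G(i,s) = 0 for all s < K for a fixed K ≥ 1. Then with the recursion and initial data as above, Λ^±(n) = 0 for all 1 ≤ n < K, and Λ^±(K) = −G(0,K) ∓ (1/2)·G(N,K) for every N ≤ K. -/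
lemma helper_7 (N K : ℕ) (hN : 0 < N) (hK : 1 ≤ K) (hNK : N ≤ K)
    (G : ℕ × ℕ → ℝ) (hGK : ∀ i s : ℕ, s < K → G (i, s) = 0)
    (Λ : ℕ → ℝ) (z : ℤ × ℕ → ℝ) (c : ℝ)
    (hz0 : ∀ k : ℤ, z (k, 0) =
      (if k = (N : ℤ) then 1 else 0) + c * (if k = -(N : ℤ) then 1 else 0))
    (hΛ : ∀ n : ℕ, 1 ≤ n → Λ n
      = -(1 / 2) * ∑ s ∈ Finset.Icc 1 n, ∑ i ∈ Finset.range (s + 1),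
          G (i, s) * (z ((N : ℤ) - 2 * i, n - s) + z ((N : ℤ) + 2 * i, n - s))) :
    (∀ n : ℕ, 1 ≤ n → n < K → Λ n = 0) ∧ Λ K = -G (0, K) - (c / 2) * G (N, K) := by
  have hNZ : (0 : ℤ) < (N : ℤ) := by exact_mod_cast hN
  constructor
  · intro n h1 hn
    rw [hΛ n h1]
    have h : ∀ s ∈ Finset.Icc 1 n, ∑ i ∈ Finset.range (s + 1),
        G (i, s) * (z ((N : ℤ) - 2 * i, n - s) + z ((N : ℤ) + 2 * i, n - s)) = 0 := by
      intro s hs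
      apply Finset.sum_eq_zero
      intro i _
      rw [hGK i s (lt_of_le_of_lt (Finset.mem_Icc.mp hs).2 hn)]
      ring
    rw [Finset.sum_congr rfl h]
    simp
  · rw [hΛ K hK]
    have hsplit : ∑ s ∈ Finset.Icc 1 K, ∑ i ∈ Finset.range (s + 1),
        G (i, s) * (z ((N : ℤ) - 2 * i, K - s) + z ((N : ℤ) + 2 * i, K - s))
        = ∑ i ∈ Finset.range (K + 1),
            G (i, K) * (z ((N : ℤ) - 2 * i, 0) + z ((N : ℤ) + 2 * i, 0)) := by
      rw [Finset.sum_eq_single_of_mem K (Finset.mem_Icc.mpr ⟨hK, le_refl K⟩)]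
      · simp
      · intro s hs hne
        apply Finset.sum_eq_zero
        intro i _
        rw [hGK i s (lt_of_le_of_ne (Finset.mem_Icc.mp hs).2 hne)]
        ring
    rw [hsplit]
    have key : ∀ i ∈ Finset.range (K + 1),
        G (i, K) * (z ((N : ℤ) - 2 * i, 0) + z ((N : ℤ) + 2 * i, 0))
        = (if i = 0 then 2 * G (0, K) else 0) + (if i = N then c * G (N, K) else 0) := by
      intro i _
      rw [hz0, hz0]
      split_ifs <;> first | (subst_vars; ring1) | (exfalso; omega)
    rw [Finset.sum_congr rfl key, Finset.sum_add_distrib,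
        Finset.sum_ite_eq' (Finset.range (K + 1)) 0 (fun _ => 2 * G (0, K)),
        Finset.sum_ite_eq' (Finset.range (K + 1)) N (fun _ => c * G (N, K))]
    have h0mem : (0 : ℕ) ∈ Finset.range (K + 1) := Finset.mem_range.mpr (Nat.succ_pos K)
    have hNmem : N ∈ Finset.range (K + 1) := Finset.mem_range.mpr (Nat.lt_succ_of_le hNK)
    rw [if_pos h0mem, if_pos hNmem]
    ring


theorem stmt_7 (N K : ℕ) (hN : 0 < N) (hK : 1 ≤ K) (hNK : N ≤ K)
    (G : ℕ × ℕ → ℝ) (hG : ∀ i s : ℕ, s < i → G (i, s) = 0)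
    (hGK : ∀ i s : ℕ, s < K → G (i, s) = 0)
    (Λp Λm : ℕ → ℝ) (zp zm : ℤ × ℕ → ℝ)
    (hzp0 : ∀ k : ℤ, zp (k, 0) =
      (if k = (N : ℤ) then 1 else 0) + (if k = -(N : ℤ) then 1 else 0))
    (hzm0 : ∀ k : ℤ, zm (k, 0) =
      (if k = (N : ℤ) then 1 else 0) - (if k = -(N : ℤ) then 1 else 0))
    (hzpN : ∀ n : ℕ, 1 ≤ n → zp ((N : ℤ), n) = 0 ∧ zp (-(N : ℤ), n) = 0)
    (hzmN : ∀ n : ℕ, 1 ≤ n → zm ((N : ℤ), n) = 0 ∧ zm (-(N : ℤ), n) = 0)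
    (hΛp : ∀ n : ℕ, 1 ≤ n → Λp n
      = -(1 / 2) * ∑ s ∈ Finset.Icc 1 n, ∑ i ∈ Finset.range (s + 1),
          G (i, s) * (zp ((N : ℤ) - 2 * i, n - s) + zp ((N : ℤ) + 2 * i, n - s)))
    (hΛm : ∀ n : ℕ, 1 ≤ n → Λm n
      = -(1 / 2) * ∑ s ∈ Finset.Icc 1 n, ∑ i ∈ Finset.range (s + 1),
          G (i, s) * (zm ((N : ℤ) - 2 * i, n - s) + zm ((N : ℤ) + 2 * i, n - s)))
    (hrecp : ∀ n : ℕ, 1 ≤ n → ∀ k : ℤ, k ^ 2 ≠ (N : ℤ) ^ 2 →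
      (((N : ℤ) ^ 2 - k ^ 2 : ℤ) : ℝ) * zp (k, n)
        = -(1 / 2) * ∑ s ∈ Finset.Icc 1 n, ∑ i ∈ Finset.range (s + 1),
            G (i, s) * (zp (k - 2 * i, n - s) + zp (k + 2 * i, n - s))
          - ∑ s ∈ Finset.Icc 1 n, Λp s * zp (k, n - s))
    (hrecm : ∀ n : ℕ, 1 ≤ n → ∀ k : ℤ, k ^ 2 ≠ (N : ℤ) ^ 2 →
      (((N : ℤ) ^ 2 - k ^ 2 : ℤ) : ℝ) * zm (k, n)
        = -(1 / 2) * ∑ s ∈ Finset.Icc 1 n, ∑ i ∈ Finset.range (s + 1),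
            G (i, s) * (zm (k - 2 * i, n - s) + zm (k + 2 * i, n - s))
          - ∑ s ∈ Finset.Icc 1 n, Λm s * zm (k, n - s)) :
    (∀ n : ℕ, 1 ≤ n → n < K → Λp n = 0 ∧ Λm n = 0) ∧
    Λp K = -G (0, K) - (1 / 2) * G (N, K) ∧
    Λm K = -G (0, K) + (1 / 2) * G (N, K) := by
  obtain ⟨h1p, h2p⟩ := helper_7 N K hN hK hNK G hGK Λp zp 1
    (fun k => by rw [hzp0 k]; ring) hΛp
  obtain ⟨h1m, h2m⟩ := helper_7 N K hN hK hNK G hGK Λm zm (-1)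
    (fun k => by rw [hzm0 k]; ring) hΛm
  exact ⟨fun n a b => ⟨h1p n a b, h1m n a b⟩, by rw [h2p], by rw [h2m]; ring⟩
end

section
/- Let r : ℕ → ℝ be defined by r(0) = 2 and, for 1 ≤ p ≤ N−1, r(p) = −(1/(8p(N−p)))·Σ_{s=1}^{p} d(s)·r(p−s), where d(s) are real numbers. Then the quantity −(1/2)·Σ_{p=0}^{N-1} d(N−p)·r(p), viewed as a function of (d(1), …, d(N)), is a polynomial in which the coefficient of the monomial d(1)^N equals (−1)^N / (((N−1)!)² · 8^{N−1}). -/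
open MvPolynomial Finset

noncomputable def Xd (N : ℕ) (s : ℕ) : MvPolynomial (Fin N) ℝ :=
  if h : s - 1 < N then MvPolynomial.X ⟨s - 1, h⟩ else 0

noncomputable def Raux (N : ℕ) : ℕ → MvPolynomial (Fin N) ℝ
  | 0 => 2
  | p + 1 => MvPolynomial.C (-(1 / (8 * ((p : ℝ) + 1) * ((N : ℝ) - ((p : ℝ) + 1))))) *
      ∑ s ∈ Finset.range (p + 1), Xd N (s + 1) * Raux N (p - s)
  decreasing_by omega

lemma Xd_succ (N s : ℕ) (h : s < N) : Xd N (s + 1) = MvPolynomial.X ⟨s, h⟩ := by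
  rw [Xd, dif_pos (show s + 1 - 1 < N by omega)]
  congr 1

lemma eval_Xd (N : ℕ) (d : ℕ → ℝ) (s : ℕ) (h : s < N) :
    MvPolynomial.eval (fun i : Fin N => d ((i : ℕ) + 1)) (Xd N (s + 1)) = d (s + 1) := by
  rw [Xd_succ N s h, MvPolynomial.eval_X]

lemma eval_Raux (N : ℕ) (d r : ℕ → ℝ) (h0 : r 0 = 2)
    (hr : ∀ p : ℕ, 1 ≤ p → p ≤ N - 1 →
      r p = -(1 / (8 * (p : ℝ) * ((N : ℝ) - (p : ℝ))))
        * ∑ s ∈ Finset.Icc 1 p, d s * r (p - s)) :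
    ∀ p : ℕ, p ≤ N - 1 →
      MvPolynomial.eval (fun i : Fin N => d ((i : ℕ) + 1)) (Raux N p) = r p := by
  intro p
  induction p using Nat.strong_induction_on with
  | _ p ih =>
    intro hp
    match p with
    | 0 => simp [Raux, h0]
    | p + 1 =>
      rw [Raux, hr (p+1) (by omega) hp]
      rw [MvPolynomial.eval_mul, MvPolynomial.eval_C, MvPolynomial.eval_sum]
      push_cast
      congr 1
      rw [← Finset.Ico_add_one_right_eq_Icc, Finset.sum_Ico_eq_sum_range]
      apply Finset.sum_congr rfl
      intro s hs
      rw [Finset.mem_range] at hs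
      rw [MvPolynomial.eval_mul, eval_Xd N d s (by omega),
        ih (p - s) (by omega) (by omega)]
      have h1 : 1 + s = s + 1 := by omega
      rw [h1, show p + 1 - (s + 1) = p - s by omega]

lemma coeff_Raux (N : ℕ) (hN : 1 ≤ N) :
    ∀ p : ℕ, p ≤ N - 1 →
      MvPolynomial.coeff (Finsupp.single (⟨0, hN⟩ : Fin N) p) (Raux N p)
        = 2 * ∏ j ∈ Finset.Icc 1 p, (-(1 / (8 * (j : ℝ) * ((N : ℝ) - (j : ℝ))))) := by
  intro p
  induction p with
  | zero =>
    intro _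
    rw [show (Raux N 0) = MvPolynomial.C 2 from by rw [Raux]; exact (map_ofNat _ 2).symm]
    simp
  | succ p ih =>
    intro hp
    rw [Raux, MvPolynomial.coeff_C_mul, MvPolynomial.coeff_sum]
    have key : ∀ s ∈ Finset.range (p+1),
        MvPolynomial.coeff (Finsupp.single (⟨0, hN⟩ : Fin N) (p+1)) (Xd N (s+1) * Raux N (p - s))
          = if s = 0 then MvPolynomial.coeff (Finsupp.single (⟨0, hN⟩ : Fin N) p) (Raux N p) else 0 := by
      intro s hs
      rw [Finset.mem_range] at hs
      have hsN : s < N := by omega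
      rw [Xd_succ N s hsN, mul_comm, MvPolynomial.coeff_mul_X']
      by_cases h0 : s = 0
      · subst h0
        have hi : (⟨0, hsN⟩ : Fin N) = ⟨0, hN⟩ := rfl
        rw [hi]
        have hm : (⟨0, hN⟩ : Fin N) ∈ (Finsupp.single (⟨0, hN⟩ : Fin N) (p+1)).support := by
          simp [Finsupp.mem_support_iff]
        rw [if_pos hm, if_pos rfl]
        congr 1
        ext i
        rw [Finsupp.tsub_apply]
        simp only [Finsupp.single_apply]
        split_ifs <;> simp
      · have hne : (⟨s, hsN⟩ : Fin N) ≠ (⟨0, hN⟩ : Fin N) := by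
          simp [Fin.ext_iff]; omega
        have hm : (⟨s, hsN⟩ : Fin N) ∉ (Finsupp.single (⟨0, hN⟩ : Fin N) (p+1)).support := by
          simp only [Finsupp.mem_support_iff, ne_eq, not_not, Finsupp.single_apply]
          rw [if_neg (fun h => hne h.symm)]
        rw [if_neg hm, if_neg h0]
    rw [Finset.sum_congr rfl key, Finset.sum_ite_eq' (Finset.range (p+1)) 0]
    rw [if_pos (by simp)]
    rw [ih (by omega), Finset.prod_Icc_succ_top (by omega)]
    push_cast
    ring

lemma prod_fact1 (n : ℕ) : ∏ j ∈ Finset.Icc 1 n, j = n.factorial := by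
  rw [← Finset.prod_range_add_one_eq_factorial, ← Finset.Ico_add_one_right_eq_Icc,
    Finset.prod_Ico_eq_prod_range]
  exact Finset.prod_congr rfl fun i _ => by omega

lemma prod_fact2 (N : ℕ) (hN : 1 ≤ N) :
    ∏ j ∈ Finset.Icc 1 (N - 1), (N - j) = (N - 1).factorial := by
  rw [← prod_fact1 (N - 1)]
  refine Finset.prod_nbij' (fun j => N - j) (fun j => N - j) ?_ ?_ ?_ ?_ ?_ <;>
    intro a ha <;> simp [Finset.mem_Icc] at * <;> omega

lemma arith_aux (N : ℕ) (hN : 1 ≤ N) :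
    -(1 / 2) * (2 * ∏ j ∈ Finset.Icc 1 (N - 1), (-(1 / (8 * (j : ℝ) * ((N : ℝ) - (j : ℝ))))))
      = (-1) ^ N / (((Nat.factorial (N - 1) : ℝ)) ^ 2 * 8 ^ (N - 1)) := by
  have hcard : (Finset.Icc 1 (N - 1)).card = N - 1 := by simp
  have h1 : ∏ j ∈ Finset.Icc 1 (N - 1), (-(1 / (8 * (j : ℝ) * ((N : ℝ) - (j : ℝ)))))
      = (-1) ^ (N - 1) * (∏ j ∈ Finset.Icc 1 (N - 1), (8 * (j : ℝ) * ((N : ℝ) - (j : ℝ))))⁻¹ := by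
    rw [Finset.prod_congr rfl (fun j (_ : j ∈ Finset.Icc 1 (N-1)) =>
        (show -(1 / (8 * (j : ℝ) * ((N : ℝ) - (j : ℝ)))) = (-1) * (8 * (j : ℝ) * ((N : ℝ) - (j : ℝ)))⁻¹ by ring)),
      Finset.prod_mul_distrib, Finset.prod_const, hcard, Finset.prod_inv_distrib]
  have hnat : ∏ j ∈ Finset.Icc 1 (N - 1), (8 * j * (N - j))
      = 8 ^ (N - 1) * ((N - 1).factorial * (N - 1).factorial) := by
    rw [Finset.prod_mul_distrib, Finset.prod_mul_distrib, Finset.prod_const, hcard,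
      prod_fact1, prod_fact2 N hN]
    ring
  have hcast : (∏ j ∈ Finset.Icc 1 (N - 1), (8 * (j : ℝ) * ((N : ℝ) - (j : ℝ))))
      = ((8 ^ (N - 1) * ((N - 1).factorial * (N - 1).factorial) : ℕ) : ℝ) := by
    rw [← hnat, Nat.cast_prod]
    refine Finset.prod_congr rfl fun j hj => ?_
    simp only [Finset.mem_Icc] at hj
    push_cast [Nat.cast_sub (by omega : j ≤ N)]
    ring
  have hpow : (-1 : ℝ) ^ N = (-1) ^ (N - 1) * (-1) := by
    rw [← pow_succ, show N - 1 + 1 = N by omega]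
  have hf : ((N - 1).factorial : ℝ) ≠ 0 := Nat.cast_ne_zero.2 (Nat.factorial_ne_zero _)
  have h8 : (8 : ℝ) ^ (N - 1) ≠ 0 := by positivity
  rw [h1, hcast, hpow]
  push_cast
  field_simp

theorem stmt_8 (N : ℕ) (hN : 1 ≤ N) :
    ∃ P : MvPolynomial (Fin N) ℝ,
      (∀ d r : ℕ → ℝ, r 0 = 2 →
        (∀ p : ℕ, 1 ≤ p → p ≤ N - 1 →
          r p = -(1 / (8 * (p : ℝ) * ((N : ℝ) - (p : ℝ))))
            * ∑ s ∈ Finset.Icc 1 p, d s * r (p - s)) →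
        -(1 / 2) * ∑ p ∈ Finset.range N, d (N - p) * r p
          = MvPolynomial.eval (fun i : Fin N => d ((i : ℕ) + 1)) P) ∧
      MvPolynomial.coeff (Finsupp.single (⟨0, hN⟩ : Fin N) N) P
        = (-1) ^ N / (((Nat.factorial (N - 1) : ℝ)) ^ 2 * 8 ^ (N - 1)) := by
  refine ⟨MvPolynomial.C (-(1/2)) * ∑ p ∈ Finset.range N, Xd N (N - p) * Raux N p, ?_, ?_⟩
  · intro d r h0 hr
    rw [MvPolynomial.eval_mul, MvPolynomial.eval_C, MvPolynomial.eval_sum]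
    congr 1
    refine Finset.sum_congr rfl fun p hp => ?_
    rw [Finset.mem_range] at hp
    rw [MvPolynomial.eval_mul, eval_Raux N d r h0 hr p (by omega),
      show N - p = (N - p - 1) + 1 by omega, eval_Xd N d (N - p - 1) (by omega)]
  · rw [MvPolynomial.coeff_C_mul, MvPolynomial.coeff_sum]
    rw [Finset.sum_eq_single_of_mem (N - 1) (Finset.mem_range.2 (by omega))]
    · rw [show N - (N - 1) = 0 + 1 by omega, Xd_succ N 0 (by omega)]
      have hi : (⟨0, by omega⟩ : Fin N) = ⟨0, hN⟩ := rfl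
      rw [hi, mul_comm (MvPolynomial.X (⟨0, hN⟩ : Fin N)) (Raux N (N - 1)), MvPolynomial.coeff_mul_X']
      have hm : (⟨0, hN⟩ : Fin N) ∈ (Finsupp.single (⟨0, hN⟩ : Fin N) N).support := by
        simp [Finsupp.mem_support_iff]; omega
      rw [if_pos hm]
      have hsub : (Finsupp.single (⟨0, hN⟩ : Fin N) N - Finsupp.single (⟨0, hN⟩ : Fin N) 1)
          = Finsupp.single (⟨0, hN⟩ : Fin N) (N - 1) := by
        ext i
        rw [Finsupp.tsub_apply]
        simp only [Finsupp.single_apply]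
        split_ifs <;> simp
      rw [hsub, coeff_Raux N hN (N - 1) le_rfl]
      linear_combination arith_aux N hN
    · intro p hp hne
      rw [Finset.mem_range] at hp
      have h2 : 1 ≤ N - p - 1 := by omega
      rw [show N - p = (N - p - 1) + 1 by omega, Xd_succ N (N - p - 1) (by omega),
        mul_comm (MvPolynomial.X (⟨N - p - 1, by omega⟩ : Fin N)) (Raux N p), MvPolynomial.coeff_mul_X']
      rw [if_neg]
      simp only [Finsupp.mem_support_iff, ne_eq, not_not, Finsupp.single_apply]
      rw [if_neg]
      intro h
      have : (0 : ℕ) = N - p - 1 := congrArg Fin.val h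
      omega
end

section
/- Let d(n) = (n / 8^{n-1}) · (α/6)^{n-1} for n ≥ 1, where α is a real number. Then d(1) = 1 and for every n ≥ 2, (n² − 1)·d(n) = (α/8)·Σ_{j=1}^{n-1} d(j)·d(n−j). -/
open Finset

/-
The closed form is d(n) = n c^{n-1} with c = α/48, so every product d(j) d(n-j) with
1 ≤ j ≤ n-1 equals j (n-j) c^{n-2}.  The recursion therefore reduces to the identity
6 ∑_{j<n} j (n-j) = n³ - n, together with α/8 = 6c.
-/

theorem six_mul_sum_range_mul_sub {R : Type*} [CommRing R] (n : ℕ) :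
    6 * ∑ j ∈ range n, (j : R) * (n - j) = n ^ 3 - n := by
  induction n with
  | zero => simp
  | succ n ih =>
    have hgauss : 2 * ∑ j ∈ range n, (j : R) = n * (n - 1) := by
      have := congrArg (Nat.cast (R := R)) (sum_range_id_mul_two n)
      rcases n with _ | n
      · simp
      · push_cast at this ⊢
        linear_combination this
    have hsplit : ∑ j ∈ range n, (j : R) * ((n + 1 : ℕ) - j)
        = ∑ j ∈ range n, (j : R) * (n - j) + ∑ j ∈ range n, (j : R) := by
      rw [← sum_add_distrib]
      exact sum_congr rfl fun j _ => by push_cast; ring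
    rw [sum_range_succ, mul_add, hsplit]
    push_cast
    linear_combination ih + 3 * hgauss

theorem sum_Icc_one_pred_eq_sum_range {M : Type*} [AddCommMonoid M] {f : ℕ → M} (hf : f 0 = 0)
    (n : ℕ) : ∑ j ∈ Icc 1 (n - 1), f j = ∑ j ∈ range n, f j := by
  refine sum_subset (fun j hj => by simp only [mem_Icc, mem_range] at hj ⊢; omega) ?_
  intro j hj hj'
  simp only [mem_Icc, mem_range] at hj hj'
  obtain rfl : j = 0 := by omega
  exact hf

theorem sq_sub_one_mul_eq_convolution_of_eq_mul_pow_pred {R : Type*} [CommRing R] (c : R) (d : ℕ → R)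
    (hd : ∀ n : ℕ, 1 ≤ n → d n = n * c ^ (n - 1)) {n : ℕ} (hn : 2 ≤ n) :
    ((n : R) ^ 2 - 1) * d n = 6 * c * ∑ j ∈ Icc 1 (n - 1), d j * d (n - j) := by
  obtain ⟨m, rfl⟩ : ∃ m, n = m + 2 := ⟨n - 2, by omega⟩
  have hterm : ∀ j ∈ Icc 1 (m + 2 - 1),
      d j * d (m + 2 - j) = (j : R) * ((m + 2 : ℕ) - j) * c ^ m := by
    intro j hj
    rw [mem_Icc] at hj
    obtain ⟨a, b, rfl, rfl⟩ : ∃ a b, j = a + 1 ∧ m = a + b := ⟨j - 1, m + 1 - j, by omega, by omega⟩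
    rw [hd _ (by omega), hd _ (by omega), show a + b + 2 - (a + 1) = b + 1 by omega]
    simp only [Nat.add_sub_cancel]
    push_cast
    ring
  rw [sum_congr rfl hterm, ← sum_mul, sum_Icc_one_pred_eq_sum_range (by simp), hd _ (by omega)]
  have hsum := six_mul_sum_range_mul_sub (R := R) (m + 2)
  push_cast at hsum ⊢
  linear_combination (-c ^ m * c) * hsum

theorem stmt_9 (α : ℝ) (d : ℕ → ℝ)
    (hd : ∀ n : ℕ, 1 ≤ n → d n = (n : ℝ) / 8 ^ (n - 1) * (α / 6) ^ (n - 1)) :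
    d 1 = 1 ∧ ∀ n : ℕ, 2 ≤ n →
      ((n : ℝ) ^ 2 - 1) * d n = (α / 8) * ∑ j ∈ Finset.Icc 1 (n - 1), d j * d (n - j) := by
  have hd' : ∀ n : ℕ, 1 ≤ n → d n = n * (α / 48) ^ (n - 1) := fun n hn => by
    rw [hd n hn, show α / 48 = α / 6 / 8 by ring, div_pow (α / 6)]
    ring
  refine ⟨by simp [hd' 1 le_rfl], fun n hn => ?_⟩
  rw [sq_sub_one_mul_eq_convolution_of_eq_mul_pow_pred (α / 48) d hd' hn]
  ring
end
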